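/- Erdős–Gallai theorem: a nonincreasing sequence d_1 ≥ d_2 ≥ ... ≥ d_n of natural numbers with even sum is graphical if and only if for every k with 1 ≤ k ≤ n, the sum of the first k degrees is at most k(k-1) plus the sum over i > k of min(d_i, k). -/

import Mathlib

/-- A sequence `d 0, …, d (n-1)` of natural numbers is graphical if it is the
degree sequence of some simple graph on `n` vertices. -/
def Graphical (n : ℕ) (d : ℕ → ℕ) : Prop :=
  ∃ (G : SimpleGraph (Fin n)) (_ : DecidableRel G.Adj), ∀ i : Fin n, G.degree i = d i

set_option maxHeartbeats 1600000

open Finset SimpleGraph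

variable {V : Type*} [Fintype V] [DecidableEq V]

def swapAdj (G : SimpleGraph V) (i j k u x y : V) : Prop :=
  (G.Adj x y ∧ ¬((x = i ∧ y = j) ∨ (x = j ∧ y = i)) ∧ ¬((x = k ∧ y = u) ∨ (x = u ∧ y = k)))
  ∨ ((x = i ∧ y = k) ∨ (x = k ∧ y = i)) ∨ ((x = j ∧ y = u) ∨ (x = u ∧ y = j))

instance swapAdjDec (G : SimpleGraph V) [DecidableRel G.Adj] (i j k u : V) :
    DecidableRel (swapAdj G i j k u) := fun x y => by
  unfold swapAdj; infer_instance

/-- Two-switch: make `i` non-adjacent to `j`, preserving all degrees. -/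
lemma swap_away (G : SimpleGraph V) [DecidableRel G.Adj] {i j k : V}
    (hij : G.Adj i j) (hik : ¬G.Adj i k) (hki : k ≠ i) (hkj : k ≠ j)
    (hdeg : G.degree j ≤ G.degree k) :
    ∃ (G₂ : SimpleGraph V) (_ : DecidableRel G₂.Adj),
      (∀ x, G₂.degree x = G.degree x) ∧ ¬G₂.Adj i j := by
  have hji : j ≠ i := fun h => G.irrefl (h ▸ hij)
  have hij' : i ≠ j := fun h => G.irrefl (h ▸ hij)
  have hik' : i ≠ k := fun h => hki h.symm
  have hdeg' : #(G.neighborFinset j) ≤ #(G.neighborFinset k) := hdeg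
  -- find u ∈ N(k) \ (N(j) ∪ {i,j})
  have hu : ∃ u, G.Adj k u ∧ ¬G.Adj j u ∧ u ≠ i ∧ u ≠ j := by
    by_contra hcon
    push_neg at hcon
    by_cases hjk : G.Adj j k
    · have hsub : G.neighborFinset k ⊆ insert j (((G.neighborFinset j).erase k).erase i) := by
        intro y hy
        rw [mem_neighborFinset] at hy
        have hyi : y ≠ i := fun h => hik (G.adj_symm (h ▸ hy))
        by_cases hyj : y = j
        · simp [hyj]
        · have hyA : G.Adj j y := by
            by_contra hng
            exact hyj (hcon y hy hng hyi)
          have hyk : y ≠ k := fun h => G.irrefl (h ▸ hy)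
          exact mem_insert_of_mem
            (mem_erase.2 ⟨hyi, mem_erase.2 ⟨hyk, (mem_neighborFinset _ _ _).2 hyA⟩⟩)
      have h1 : #(G.neighborFinset k) ≤ #(((G.neighborFinset j).erase k).erase i) + 1 :=
        le_trans (card_le_card hsub) (card_insert_le _ _)
      have hkmem : k ∈ G.neighborFinset j := (mem_neighborFinset _ _ _).2 hjk
      have himem : i ∈ (G.neighborFinset j).erase k :=
        mem_erase.2 ⟨hik', (mem_neighborFinset _ _ _).2 (G.adj_symm hij)⟩
      have h2 : 1 ≤ #((G.neighborFinset j).erase k) := card_pos.2 ⟨i, himem⟩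
      rw [card_erase_of_mem himem, card_erase_of_mem hkmem] at h1
      rw [card_erase_of_mem hkmem] at h2
      omega
    · have hsub : G.neighborFinset k ⊆ (G.neighborFinset j).erase i := by
        intro y hy
        rw [mem_neighborFinset] at hy
        have hyi : y ≠ i := fun h => hik (G.adj_symm (h ▸ hy))
        have hyj : y ≠ j := fun h => hjk (G.adj_symm (h ▸ hy))
        have hyA : G.Adj j y := by
          by_contra hng
          exact hyj (hcon y hy hng hyi)
        exact mem_erase.2 ⟨hyi, (mem_neighborFinset _ _ _).2 hyA⟩
      have h1 := card_le_card hsub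
      have himem : i ∈ G.neighborFinset j := (mem_neighborFinset _ _ _).2 (G.adj_symm hij)
      rw [card_erase_of_mem himem] at h1
      have h2 : 1 ≤ #(G.neighborFinset j) := card_pos.2 ⟨i, himem⟩
      omega
  obtain ⟨u, hku, hju, hui, huj⟩ := hu
  have huk : u ≠ k := fun h => G.irrefl (h ▸ hku)
  have hAsymm : Symmetric (swapAdj G i j k u) := by
    intro x y h
    unfold swapAdj at h ⊢
    rcases h with ⟨h1, h2, h3⟩ | h | h
    · refine Or.inl ⟨G.adj_symm h1, ?_, ?_⟩
      · rintro (⟨a, b⟩ | ⟨a, b⟩)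
        · exact h2 (Or.inr ⟨b, a⟩)
        · exact h2 (Or.inl ⟨b, a⟩)
      · rintro (⟨a, b⟩ | ⟨a, b⟩)
        · exact h3 (Or.inr ⟨b, a⟩)
        · exact h3 (Or.inl ⟨b, a⟩)
    · rcases h with ⟨a, b⟩ | ⟨a, b⟩
      · exact Or.inr (Or.inl (Or.inr ⟨b, a⟩))
      · exact Or.inr (Or.inl (Or.inl ⟨b, a⟩))
    · rcases h with ⟨a, b⟩ | ⟨a, b⟩
      · exact Or.inr (Or.inr (Or.inr ⟨b, a⟩))
      · exact Or.inr (Or.inr (Or.inl ⟨b, a⟩))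
  have hAirr : ∀ x, ¬swapAdj G i j k u x x := by
    intro x h
    unfold swapAdj at h
    rcases h with ⟨h1, _, _⟩ | h | h
    · exact G.irrefl h1
    · rcases h with ⟨h1, h2⟩ | ⟨h1, h2⟩ <;> exact hik' (h1 ▸ h2 ▸ rfl)
    · rcases h with ⟨h1, h2⟩ | ⟨h1, h2⟩ <;> exact huj ((h2.symm.trans h1).symm ▸ rfl)
  refine ⟨⟨swapAdj G i j k u, Std.Symm.mk fun _ _ h => hAsymm h, Std.Irrefl.mk hAirr⟩, swapAdjDec G i j k u, ?_, ?_⟩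
  · intro x
    set G₂ : SimpleGraph V := SimpleGraph.mk (swapAdj G i j k u) (Std.Symm.mk fun _ _ h => hAsymm h) (Std.Irrefl.mk hAirr)
      with hG₂
    have hadj : ∀ a b, G₂.Adj a b ↔ swapAdj G i j k u a b := fun a b => Iff.rfl
    by_cases hxi : x = i
    · subst hxi
      have e1 : G₂.neighborFinset x = insert k ((G.neighborFinset x).erase j) := by
        ext y
        rw [mem_neighborFinset, mem_insert, mem_erase, mem_neighborFinset, hadj]
        unfold swapAdj
        constructor
        · intro h; tauto
        · rintro (rfl | ⟨h1, h2⟩) <;> tauto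
      rw [SimpleGraph.degree, e1, SimpleGraph.degree,
        card_insert_of_notMem (by simp [mem_erase, mem_neighborFinset, hik]),
        card_erase_of_mem (by rw [mem_neighborFinset]; exact hij)]
      have : 1 ≤ #(G.neighborFinset x) := card_pos.2 ⟨j, (mem_neighborFinset _ _ _).2 hij⟩
      omega
    · by_cases hxj : x = j
      · subst hxj
        have e1 : G₂.neighborFinset x = insert u ((G.neighborFinset x).erase i) := by
          ext y
          rw [mem_neighborFinset, mem_insert, mem_erase, mem_neighborFinset, hadj]
          unfold swapAdj
          constructor
          · intro h; tauto
          · rintro (rfl | ⟨h1, h2⟩) <;> tauto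
        rw [SimpleGraph.degree, e1, SimpleGraph.degree,
          card_insert_of_notMem (by simp [mem_erase, mem_neighborFinset, hju]),
          card_erase_of_mem (by rw [mem_neighborFinset]; exact G.adj_symm hij)]
        have : 1 ≤ #(G.neighborFinset x) :=
          card_pos.2 ⟨i, (mem_neighborFinset _ _ _).2 (G.adj_symm hij)⟩
        omega
      · by_cases hxk : x = k
        · subst hxk
          have hxadj : ¬ G.Adj x i := fun h => hik (G.adj_symm h)
          have e1 : G₂.neighborFinset x = insert i ((G.neighborFinset x).erase u) := by
            ext y
            rw [mem_neighborFinset, mem_insert, mem_erase, mem_neighborFinset, hadj]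
            unfold swapAdj
            constructor
            · intro h; tauto
            · rintro (rfl | ⟨h1, h2⟩) <;> tauto
          rw [SimpleGraph.degree, e1, SimpleGraph.degree,
            card_insert_of_notMem (by simp [mem_erase, mem_neighborFinset, hxadj]),
            card_erase_of_mem (by rw [mem_neighborFinset]; exact hku)]
          have : 1 ≤ #(G.neighborFinset x) := card_pos.2 ⟨u, (mem_neighborFinset _ _ _).2 hku⟩
          omega
        · by_cases hxu : x = u
          · subst hxu
            have hxadj : ¬ G.Adj x j := fun h => hju (G.adj_symm h)
            have hxk' : G.Adj x k := G.adj_symm hku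
            have e1 : G₂.neighborFinset x = insert j ((G.neighborFinset x).erase k) := by
              ext y
              rw [mem_neighborFinset, mem_insert, mem_erase, mem_neighborFinset, hadj]
              unfold swapAdj
              constructor
              · intro h; tauto
              · rintro (rfl | ⟨h1, h2⟩) <;> tauto
            rw [SimpleGraph.degree, e1, SimpleGraph.degree,
              card_insert_of_notMem (by simp [mem_erase, mem_neighborFinset, hxadj]),
              card_erase_of_mem (by rw [mem_neighborFinset]; exact G.adj_symm hku)]
            have : 1 ≤ #(G.neighborFinset x) :=
              card_pos.2 ⟨k, (mem_neighborFinset _ _ _).2 (G.adj_symm hku)⟩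
            omega
          · have e1 : G₂.neighborFinset x = G.neighborFinset x := by
              ext y
              rw [mem_neighborFinset, mem_neighborFinset, hadj]
              unfold swapAdj
              constructor
              · intro h; tauto
              · intro h; tauto
            rw [SimpleGraph.degree, e1, SimpleGraph.degree]
  · intro h
    have h' : swapAdj G i j k u i j := h
    unfold swapAdj at h'
    tauto



def addAdj (G : SimpleGraph V) (t m x y : V) : Prop :=
  G.Adj x y ∨ (x = t ∧ y = m) ∨ (x = m ∧ y = t)

instance addAdjDec (G : SimpleGraph V) [DecidableRel G.Adj] (t m : V) :
    DecidableRel (addAdj G t m) := fun x y => by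
  unfold addAdj; infer_instance

lemma add_edge (G : SimpleGraph V) [DecidableRel G.Adj] {t m : V} (htm : t ≠ m)
    (hna : ¬G.Adj t m) :
    ∃ (G₃ : SimpleGraph V) (_ : DecidableRel G₃.Adj),
      G₃.degree t = G.degree t + 1 ∧ G₃.degree m = G.degree m + 1 ∧
      ∀ x, x ≠ t → x ≠ m → G₃.degree x = G.degree x := by
  have hmt : m ≠ t := fun h => htm h.symm
  have hna' : ¬G.Adj m t := fun h => hna (G.adj_symm h)
  have hAsymm : Symmetric (addAdj G t m) := by
    intro x y h
    unfold addAdj at h ⊢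
    rcases h with h | ⟨a, b⟩ | ⟨a, b⟩
    · exact Or.inl (G.adj_symm h)
    · exact Or.inr (Or.inr ⟨b, a⟩)
    · exact Or.inr (Or.inl ⟨b, a⟩)
  have hAirr : ∀ x, ¬addAdj G t m x x := by
    intro x h
    unfold addAdj at h
    rcases h with h | ⟨a, b⟩ | ⟨a, b⟩
    · exact G.irrefl h
    · exact htm (a.symm.trans b)
    · exact hmt (a.symm.trans b)
  refine ⟨⟨addAdj G t m, Std.Symm.mk fun _ _ h => hAsymm h, Std.Irrefl.mk hAirr⟩, addAdjDec G t m, ?_, ?_, ?_⟩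
  · set G₃ : SimpleGraph V := SimpleGraph.mk (addAdj G t m) (Std.Symm.mk fun _ _ h => hAsymm h) (Std.Irrefl.mk hAirr) with hG₃
    have e1 : G₃.neighborFinset t = insert m (G.neighborFinset t) := by
      ext y
      rw [mem_neighborFinset, mem_insert, mem_neighborFinset]
      show addAdj G t m t y ↔ _
      unfold addAdj
      constructor
      · rintro (h | ⟨a, b⟩ | ⟨a, b⟩)
        · exact Or.inr h
        · exact Or.inl b
        · exact absurd a htm
      · rintro (rfl | h)
        · exact Or.inr (Or.inl ⟨rfl, rfl⟩)
        · exact Or.inl h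
    rw [SimpleGraph.degree, e1, SimpleGraph.degree,
      card_insert_of_notMem (by rw [mem_neighborFinset]; exact hna)]
  · set G₃ : SimpleGraph V := SimpleGraph.mk (addAdj G t m) (Std.Symm.mk fun _ _ h => hAsymm h) (Std.Irrefl.mk hAirr) with hG₃
    have e1 : G₃.neighborFinset m = insert t (G.neighborFinset m) := by
      ext y
      rw [mem_neighborFinset, mem_insert, mem_neighborFinset]
      show addAdj G t m m y ↔ _
      unfold addAdj
      constructor
      · rintro (h | ⟨a, b⟩ | ⟨a, b⟩)
        · exact Or.inr h
        · exact absurd a hmt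
        · exact Or.inl b
      · rintro (rfl | h)
        · exact Or.inr (Or.inr ⟨rfl, rfl⟩)
        · exact Or.inl h
    rw [SimpleGraph.degree, e1, SimpleGraph.degree,
      card_insert_of_notMem (by rw [mem_neighborFinset]; exact hna')]
  · intro x hxt hxm
    set G₃ : SimpleGraph V := SimpleGraph.mk (addAdj G t m) (Std.Symm.mk fun _ _ h => hAsymm h) (Std.Irrefl.mk hAirr) with hG₃
    have e1 : G₃.neighborFinset x = G.neighborFinset x := by
      ext y
      rw [mem_neighborFinset, mem_neighborFinset]
      show addAdj G t m x y ↔ _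
      unfold addAdj
      constructor
      · rintro (h | ⟨a, b⟩ | ⟨a, b⟩)
        · exact h
        · exact absurd a hxt
        · exact absurd a hxm
      · exact fun h => Or.inl h
    rw [SimpleGraph.degree, e1, SimpleGraph.degree]


lemma graphical_nec (n : ℕ) (d : ℕ → ℕ) (h : Graphical n d) :
    ∀ k, 1 ≤ k → k ≤ n →
      ∑ i ∈ Finset.range k, d i ≤ k * (k - 1) + ∑ i ∈ Finset.Ico k n, min (d i) k := by
  obtain ⟨G, inst, hdeg⟩ := h
  intro k hk1 hkn
  classical
  set A : Finset (Fin n) := univ.filter (fun x => x.val < k) with hA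
  set B : Finset (Fin n) := univ.filter (fun x => ¬ x.val < k) with hB
  have hmemA : ∀ x : Fin n, x ∈ A ↔ x.val < k := by
    intro x; rw [hA, mem_filter]; simp
  have hmemB : ∀ x : Fin n, x ∈ B ↔ k ≤ x.val := by
    intro x; rw [hB, mem_filter]; simp
  have hAcard : A.card = k := by
    have : A = (Finset.range k).attachFin
        (fun m hm => lt_of_lt_of_le (mem_range.1 hm) hkn) := by
      ext x
      rw [hmemA, mem_attachFin, mem_range]
    rw [this, card_attachFin, card_range]
  have h1 : ∑ i ∈ Finset.range k, d i = ∑ x ∈ A, d x.val := by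
    refine Finset.sum_nbij' (i := fun a => (⟨a % n, Nat.mod_lt _ (by omega)⟩ : Fin n))
      (j := fun x => x.val) ?_ ?_ ?_ ?_ ?_
    · intro a ha
      have h := mem_range.1 ha
      rw [hmemA]
      show a % n < k
      rw [Nat.mod_eq_of_lt (by omega)]; exact h
    · intro x hx
      exact mem_range.2 ((hmemA x).1 hx)
    · intro a ha
      have h := mem_range.1 ha
      show a % n = a
      rw [Nat.mod_eq_of_lt (by omega)]
    · intro x hx
      apply Fin.ext
      show (x.val % n : ℕ) = x.val
      rw [Nat.mod_eq_of_lt x.isLt]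
    · intro a ha
      have h := mem_range.1 ha
      show d a = d (a % n)
      rw [Nat.mod_eq_of_lt (by omega)]
  have h2 : ∑ i ∈ Finset.Ico k n, min (d i) k = ∑ x ∈ B, min (d x.val) k := by
    refine Finset.sum_nbij' (i := fun a => (⟨a % n, Nat.mod_lt _ (by omega)⟩ : Fin n))
      (j := fun x => x.val) ?_ ?_ ?_ ?_ ?_
    · intro a ha
      have h := mem_Ico.1 ha
      rw [hmemB]
      show k ≤ a % n
      rw [Nat.mod_eq_of_lt (by omega)]; exact h.1
    · intro x hx
      exact mem_Ico.2 ⟨(hmemB x).1 hx, x.isLt⟩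
    · intro a ha
      have h := mem_Ico.1 ha
      show a % n = a
      rw [Nat.mod_eq_of_lt (by omega)]
    · intro x hx
      apply Fin.ext
      show (x.val % n : ℕ) = x.val
      rw [Nat.mod_eq_of_lt x.isLt]
    · intro a ha
      have h := mem_Ico.1 ha
      show min (d a) k = min (d (a % n)) k
      rw [Nat.mod_eq_of_lt (by omega)]
  rw [h1, h2]
  have h3 : ∑ x ∈ A, d x.val = ∑ x ∈ A, G.degree x :=
    Finset.sum_congr rfl (fun x _ => (hdeg x).symm)
  rw [h3]
  have h4 : ∀ x : Fin n, G.degree x =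
      #((G.neighborFinset x).filter (fun y => y.val < k)) +
      #((G.neighborFinset x).filter (fun y => ¬ y.val < k)) := by
    intro x
    rw [SimpleGraph.degree, Finset.card_filter_add_card_filter_not]
  have h5 : ∀ x ∈ A, #((G.neighborFinset x).filter (fun y => y.val < k)) ≤ k - 1 := by
    intro x hx
    have hsub : (G.neighborFinset x).filter (fun y => y.val < k) ⊆ A.erase x := by
      intro y hy
      rw [mem_filter, mem_neighborFinset] at hy
      exact mem_erase.2 ⟨fun hxy => G.irrefl (hxy ▸ hy.1), (hmemA y).2 hy.2⟩
    calc #((G.neighborFinset x).filter (fun y => y.val < k)) ≤ #(A.erase x) := card_le_card hsub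
      _ = k - 1 := by rw [card_erase_of_mem hx, hAcard]
  have h6 : ∑ x ∈ A, #((G.neighborFinset x).filter (fun y => ¬ y.val < k)) =
      ∑ y ∈ B, #((G.neighborFinset y).filter (fun z => z.val < k)) := by
    have e1 : ∀ x : Fin n, (G.neighborFinset x).filter (fun y => ¬ y.val < k) =
        B.filter (fun y => G.Adj x y) := by
      intro x
      ext y
      rw [mem_filter, mem_filter, mem_neighborFinset, hmemB]
      exact ⟨fun ⟨a, b⟩ => ⟨by omega, a⟩, fun ⟨a, b⟩ => ⟨b, by omega⟩⟩
    have e2 : ∀ y : Fin n, (G.neighborFinset y).filter (fun z => z.val < k) =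
        A.filter (fun z => G.Adj y z) := by
      intro y
      ext z
      rw [mem_filter, mem_filter, mem_neighborFinset, hmemA]
      exact ⟨fun ⟨a, b⟩ => ⟨b, a⟩, fun ⟨a, b⟩ => ⟨b, a⟩⟩
    calc ∑ x ∈ A, #((G.neighborFinset x).filter (fun y => ¬ y.val < k))
        = ∑ x ∈ A, ∑ y ∈ B, (if G.Adj x y then 1 else 0) := by
          refine Finset.sum_congr rfl (fun x _ => ?_)
          rw [e1, Finset.card_filter]
      _ = ∑ y ∈ B, ∑ x ∈ A, (if G.Adj x y then 1 else 0) := Finset.sum_comm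
      _ = ∑ y ∈ B, ∑ x ∈ A, (if G.Adj y x then 1 else 0) := by
          refine Finset.sum_congr rfl (fun y _ => Finset.sum_congr rfl (fun x _ => ?_))
          simp only [G.adj_comm]
      _ = ∑ y ∈ B, #((G.neighborFinset y).filter (fun z => z.val < k)) := by
          refine Finset.sum_congr rfl (fun y _ => ?_)
          rw [e2, Finset.card_filter]
  have h7 : ∀ y ∈ B, #((G.neighborFinset y).filter (fun z => z.val < k)) ≤ min (d y.val) k := by
    intro y _
    refine le_min ?_ ?_
    · calc #((G.neighborFinset y).filter (fun z => z.val < k)) ≤ #(G.neighborFinset y) :=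
          card_filter_le _ _
        _ = d y.val := hdeg y
    · have hsub : (G.neighborFinset y).filter (fun z => z.val < k) ⊆ A := by
        intro z hz
        rw [mem_filter] at hz
        exact (hmemA z).2 hz.2
      calc #((G.neighborFinset y).filter (fun z => z.val < k)) ≤ #A := card_le_card hsub
        _ = k := hAcard
  calc ∑ x ∈ A, G.degree x
      = ∑ x ∈ A, (#((G.neighborFinset x).filter (fun y => y.val < k)) +
          #((G.neighborFinset x).filter (fun y => ¬ y.val < k))) :=
        Finset.sum_congr rfl (fun x _ => h4 x)
    _ = (∑ x ∈ A, #((G.neighborFinset x).filter (fun y => y.val < k))) +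
        ∑ x ∈ A, #((G.neighborFinset x).filter (fun y => ¬ y.val < k)) := Finset.sum_add_distrib
    _ ≤ (∑ _x ∈ A, (k - 1)) + ∑ y ∈ B, min (d y.val) k := by
        rw [h6]
        exact add_le_add (Finset.sum_le_sum h5) (Finset.sum_le_sum h7)
    _ = k * (k - 1) + ∑ y ∈ B, min (d y.val) k := by
        rw [Finset.sum_const, hAcard, smul_eq_mul]


lemma sum_two_erase (f : ℕ → ℕ) {s : Finset ℕ} {t m : ℕ} (ht : t ∈ s) (hm : m ∈ s)
    (htm : t ≠ m) :
    ∑ i ∈ s, f i = f t + f m + ∑ i ∈ (s.erase t).erase m, f i := by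
  rw [← Finset.add_sum_erase _ f ht,
    ← Finset.add_sum_erase _ f (Finset.mem_erase.2 ⟨fun h => htm h.symm, hm⟩)]
  ring

lemma choudum (n : ℕ) (d : ℕ → ℕ) (t m : ℕ)
    (hs : ∀ i j, i ≤ j → j < n → d j ≤ d i)
    (hEG : ∀ k, 1 ≤ k → k ≤ n →
      ∑ i ∈ Finset.range k, d i ≤ k * (k - 1) + ∑ i ∈ Finset.Ico k n, min (d i) k)
    (heven : Even (∑ i ∈ Finset.range n, d i))
    (hmn : m < n) (hdm : 1 ≤ d m)
    (hzero : ∀ i, m < i → i < n → d i = 0)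
    (htm : t < m)
    (hconst : ∀ i, i ≤ t → d i = d t)
    (hdrop : ∀ i, t < i → i < n → i ≠ m → d i < d t) :
    (∀ i j, i ≤ j → j < n →
      (if j = t ∨ j = m then d j - 1 else d j) ≤ (if i = t ∨ i = m then d i - 1 else d i)) ∧
    (∑ i ∈ Finset.range n, (if i = t ∨ i = m then d i - 1 else d i) + 2
      = ∑ i ∈ Finset.range n, d i) ∧
    (∀ k, 1 ≤ k → k ≤ n →
      ∑ i ∈ Finset.range k, (if i = t ∨ i = m then d i - 1 else d i) ≤
        k * (k - 1) + ∑ i ∈ Finset.Ico k n, min (if i = t ∨ i = m then d i - 1 else d i) k) := by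
  set d' : ℕ → ℕ := fun i => if i = t ∨ i = m then d i - 1 else d i with hd'
  have htm' : t ≠ m := Nat.ne_of_lt htm
  have htn : t < n := lt_trans htm hmn
  have hdt : 1 ≤ d t := le_trans hdm (hs t m (le_of_lt htm) hmn)
  have hdmt : d m ≤ d t := hs t m (le_of_lt htm) hmn
  have hd't : d' t = d t - 1 := by rw [hd']; simp
  have hd'm : d' m = d m - 1 := by rw [hd']; simp
  have hd'o : ∀ i, i ≠ t → i ≠ m → d' i = d i := by
    intro i h1 h2; rw [hd']; simp [h1, h2]
  -- sortedness
  have hsorted' : ∀ i j, i ≤ j → j < n → d' j ≤ d' i := by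
    intro i j hij hj
    by_cases hjt : j = t
    · have ej : d' j = d t - 1 := by rw [hjt, hd't]
      by_cases hit : i = t
      · rw [ej, hit, hd't]
      · have him : i ≠ m := by omega
        rw [ej, hd'o i hit him, hconst i (by omega)]
        omega
    · by_cases hjm : j = m
      · have ej : d' j = d m - 1 := by rw [hjm, hd'm]
        by_cases hit : i = t
        · rw [ej, hit, hd't]; omega
        · by_cases him : i = m
          · rw [ej, him, hd'm]
          · rw [ej, hd'o i hit him]
            have := hs i m (by omega) hmn
            omega
      · -- j ∉ {t, m}
        rw [hd'o j hjt hjm]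
        by_cases hjlt : j < t
        · have hit : i ≠ t := by omega
          have him : i ≠ m := by omega
          rw [hd'o i hit him]
          exact hs i j hij hj
        · have hjgt : t < j := by omega
          have hdj : d j < d t := hdrop j hjgt hj hjm
          by_cases hit : i = t
          · rw [hit, hd't]; omega
          · by_cases him : i = m
            · rw [him, hd'm]
              have hjm' : m < j := by omega
              have := hzero j hjm' hj
              omega
            · rw [hd'o i hit him]
              exact hs i j hij hj
  refine ⟨hsorted', ?_, ?_⟩
  · have ht' : t ∈ Finset.range n := mem_range.2 htn
    have hm' : m ∈ Finset.range n := mem_range.2 hmn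
    rw [sum_two_erase d' ht' hm' htm', sum_two_erase d ht' hm' htm', hd't, hd'm]
    have : ∑ i ∈ ((Finset.range n).erase t).erase m, d' i
        = ∑ i ∈ ((Finset.range n).erase t).erase m, d i := by
      refine Finset.sum_congr rfl (fun x hx => ?_)
      rw [mem_erase, mem_erase] at hx
      exact hd'o x hx.2.1 hx.1
    omega
  · intro k hk1 hkn
    have hEGk := hEG k hk1 hkn
    change ∑ i ∈ Finset.range k, d' i ≤
      k * (k - 1) + ∑ i ∈ Finset.Ico k n, min (d' i) k
    set K := k * (k - 1) with hK
    by_cases hc1 : m < k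
    · -- Case 1 : both t and m in the prefix
      have ht' : t ∈ Finset.range k := mem_range.2 (by omega)
      have hm' : m ∈ Finset.range k := mem_range.2 hc1
      have hL : ∑ i ∈ Finset.range k, d' i + 2 = ∑ i ∈ Finset.range k, d i := by
        rw [sum_two_erase d' ht' hm' htm', sum_two_erase d ht' hm' htm', hd't, hd'm]
        have : ∑ i ∈ ((Finset.range k).erase t).erase m, d' i
            = ∑ i ∈ ((Finset.range k).erase t).erase m, d i := by
          refine Finset.sum_congr rfl (fun x hx => ?_)
          rw [mem_erase, mem_erase] at hx
          exact hd'o x hx.2.1 hx.1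
        omega
      have hR : ∑ i ∈ Finset.Ico k n, min (d' i) k = ∑ i ∈ Finset.Ico k n, min (d i) k := by
        refine Finset.sum_congr rfl (fun x hx => ?_)
        rw [mem_Ico] at hx
        rw [hd'o x (by omega) (by omega)]
      omega
    · by_cases hc2 : t < k
      · -- Case 2 : t in prefix, m in suffix
        have ht' : t ∈ Finset.range k := mem_range.2 hc2
        have hm' : m ∈ Finset.Ico k n := mem_Ico.2 ⟨by omega, hmn⟩
        have hL : ∑ i ∈ Finset.range k, d' i + 1 = ∑ i ∈ Finset.range k, d i := by
          rw [← Finset.add_sum_erase _ d' ht', ← Finset.add_sum_erase _ d ht', hd't]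
          have : ∑ i ∈ (Finset.range k).erase t, d' i
              = ∑ i ∈ (Finset.range k).erase t, d i := by
            refine Finset.sum_congr rfl (fun x hx => ?_)
            rw [mem_erase, mem_range] at hx
            exact hd'o x hx.1 (by omega)
          omega
        have hR : ∑ i ∈ Finset.Ico k n, min (d i) k ≤
            ∑ i ∈ Finset.Ico k n, min (d' i) k + 1 := by
          rw [← Finset.add_sum_erase _ (fun i => min (d' i) k) hm',
            ← Finset.add_sum_erase _ (fun i => min (d i) k) hm', hd'm]
          have : ∑ i ∈ (Finset.Ico k n).erase m, min (d' i) k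
              = ∑ i ∈ (Finset.Ico k n).erase m, min (d i) k := by
            refine Finset.sum_congr rfl (fun x hx => ?_)
            rw [mem_erase, mem_Ico] at hx
            rw [hd'o x (by omega) hx.1]
          rw [this]
          have : min (d m) k ≤ min (d m - 1) k + 1 := by omega
          omega
        omega
      · -- Case 3 : k ≤ t
        have hkt : k ≤ t := by omega
        have ht' : t ∈ Finset.Ico k n := mem_Ico.2 ⟨hkt, htn⟩
        have hm' : m ∈ Finset.Ico k n := mem_Ico.2 ⟨by omega, hmn⟩
        have hL : ∑ i ∈ Finset.range k, d' i = k * d t := by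
          have e : ∀ i ∈ Finset.range k, d' i = d t := by
            intro i hi
            rw [mem_range] at hi
            rw [hd'o i (by omega) (by omega)]
            exact hconst i (by omega)
          rw [Finset.sum_congr rfl e, Finset.sum_const, card_range, smul_eq_mul]
        have hLd : ∑ i ∈ Finset.range k, d i = k * d t := by
          have e : ∀ i ∈ Finset.range k, d i = d t := by
            intro i hi
            rw [mem_range] at hi
            exact hconst i (by omega)
          rw [Finset.sum_congr rfl e, Finset.sum_const, card_range, smul_eq_mul]
        by_cases hc3 : k < d m
        · -- 3a : no change on the right side
          have hR : ∑ i ∈ Finset.Ico k n, min (d' i) k = ∑ i ∈ Finset.Ico k n, min (d i) k := by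
            refine Finset.sum_congr rfl (fun x hx => ?_)
            by_cases hxt : x = t
            · rw [hxt, hd't]
              have : k < d t := by omega
              omega
            · by_cases hxm : x = m
              · rw [hxm, hd'm]
                omega
              · rw [hd'o x hxt hxm]
          omega
        · by_cases hc4 : k < d t
          · -- 3b : d m ≤ k < d t
            have hex : ∃ i, i < n ∧ d i ≤ k := ⟨m, hmn, by omega⟩
            obtain ⟨r, ⟨hrn, hdr⟩, hrmin, hrm⟩ :
                ∃ r, (r < n ∧ d r ≤ k) ∧ (∀ i, i < r → ¬(i < n ∧ d i ≤ k)) ∧ r ≤ m :=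
              ⟨Nat.find hex, Nat.find_spec hex, fun i hi => Nat.find_min hex hi,
                Nat.find_min' hex ⟨hmn, by omega⟩⟩
            have hrbig : ∀ i, i < r → k + 1 ≤ d i := by
              intro i hi
              have := hrmin i hi
              push_neg at this
              by_contra hcon
              have h2 : i < n := by omega
              omega
            have htr : t < r := by
              by_contra hcon
              push_neg at hcon
              have := hconst r hcon
              omega
            -- split the Ico sum at r
            have hsplit : ∑ i ∈ Finset.Ico k r, min (d' i) k + ∑ i ∈ Finset.Ico r n, min (d' i) k
                = ∑ i ∈ Finset.Ico k n, min (d' i) k :=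
              Finset.sum_Ico_consecutive _ (by omega) (by omega)
            have hA1 : ∑ i ∈ Finset.Ico k r, min (d' i) k = (r - k) * k := by
              have e : ∀ i ∈ Finset.Ico k r, min (d' i) k = k := by
                intro i hi
                rw [mem_Ico] at hi
                by_cases hit : i = t
                · rw [hit, hd't]; omega
                · rw [hd'o i hit (by omega)]
                  have := hrbig i hi.2
                  omega
              rw [Finset.sum_congr rfl e, Finset.sum_const, Nat.card_Ico, smul_eq_mul]
            set T := ∑ i ∈ Finset.Ico r n, d i with hT
            have hm'' : m ∈ Finset.Ico r n := mem_Ico.2 ⟨hrm, hmn⟩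
            have hsmall : ∀ i, r ≤ i → i < n → d i ≤ k := fun i h1 h2 =>
              le_trans (hs r i h1 h2) hdr
            have hA2 : ∑ i ∈ Finset.Ico r n, min (d' i) k + 1 = T := by
              have e : ∀ i ∈ Finset.Ico r n, min (d' i) k = d' i := by
                intro i hi
                rw [mem_Ico] at hi
                have h1 := hsmall i hi.1 hi.2
                by_cases hit : i = t
                · omega
                · by_cases him : i = m
                  · rw [him, hd'm]; omega
                  · rw [hd'o i hit him]; omega
              rw [Finset.sum_congr rfl e, hT]
              rw [← Finset.add_sum_erase _ d' hm'', ← Finset.add_sum_erase _ d hm'', hd'm]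
              have : ∑ i ∈ (Finset.Ico r n).erase m, d' i
                  = ∑ i ∈ (Finset.Ico r n).erase m, d i := by
                refine Finset.sum_congr rfl (fun x hx => ?_)
                rw [mem_erase, mem_Ico] at hx
                exact hd'o x (by omega) hx.1
              omega
            have hTpos : 1 ≤ T := by
              rw [hT]
              calc 1 ≤ d m := hdm
                _ ≤ ∑ i ∈ Finset.Ico r n, d i :=
                  Finset.single_le_sum (fun i _ => Nat.zero_le _) hm''
            have key : k * d t + 1 ≤ k * (r - 1) + T := by
              by_cases hvr : d t < r
              · have q1 : k * d t ≤ k * (r - 1) := Nat.mul_le_mul_left k (by omega)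
                omega
              · -- d t ≥ r : use EG at t+1
                push_neg at hvr
                have hEGt := hEG (t + 1) (by omega) (by omega)
                have eL : ∑ i ∈ Finset.range (t + 1), d i = (t + 1) * d t := by
                  have e : ∀ i ∈ Finset.range (t + 1), d i = d t := by
                    intro i hi
                    rw [mem_range] at hi
                    exact hconst i (by omega)
                  rw [Finset.sum_congr rfl e, Finset.sum_const, card_range, smul_eq_mul]
                have hsplit2 : ∑ i ∈ Finset.Ico (t+1) r, min (d i) (t+1)
                    + ∑ i ∈ Finset.Ico r n, min (d i) (t+1)
                    = ∑ i ∈ Finset.Ico (t+1) n, min (d i) (t+1) :=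
                  Finset.sum_Ico_consecutive _ (by omega) (by omega)
                have hb1 : ∑ i ∈ Finset.Ico (t+1) r, min (d i) (t+1) ≤ (r - (t+1)) * (t+1) := by
                  calc ∑ i ∈ Finset.Ico (t+1) r, min (d i) (t+1)
                      ≤ ∑ _i ∈ Finset.Ico (t+1) r, (t+1) :=
                        Finset.sum_le_sum (fun i _ => Nat.min_le_right _ _)
                    _ = (r - (t+1)) * (t+1) := by rw [Finset.sum_const, Nat.card_Ico, smul_eq_mul]
                have hb2 : ∑ i ∈ Finset.Ico r n, min (d i) (t+1) ≤ T := by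
                  rw [hT]
                  exact Finset.sum_le_sum (fun i _ => Nat.min_le_left _ _)
                have e2 : (t+1) * t + (r - (t+1)) * (t+1) = (t+1) * (r-1) := by
                  have h1 : t + (r - (t+1)) = r - 1 := by omega
                  calc (t+1) * t + (r - (t+1)) * (t+1) = (t+1) * (t + (r - (t+1))) := by ring
                    _ = (t+1) * (r-1) := by rw [h1]
                have hmain : (t+1) * d t ≤ (t+1) * (r - 1) + T := by
                  rw [eL] at hEGt
                  have : (t+1) * ((t+1) - 1) = (t+1) * t := rfl
                  omega
                set w := d t - (r - 1) with hw
                have hw1 : 1 ≤ w := by omega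
                have hdt_eq : d t = (r - 1) + w := by omega
                have e3 : (t+1) * d t = (t+1) * (r-1) + (t+1) * w := by
                  rw [hdt_eq]; ring
                have e4 : k * d t = k * (r-1) + k * w := by
                  rw [hdt_eq]; ring
                have q1 : (k+1) * w ≤ (t+1) * w := Nat.mul_le_mul_right w (by omega)
                have q2 : k * w + w = (k+1) * w := by ring
                omega
            have e1 : K + (r - k) * k = k * (r - 1) := by
              rw [hK]
              have h1 : (k - 1) + (r - k) = r - 1 := by omega
              calc k * (k-1) + (r - k) * k = k * ((k-1) + (r - k)) := by ring
                _ = k * (r-1) := by rw [h1]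
            omega
          · -- 3c : d t ≤ k, everything small
            have hd0 : d 0 = d t := hconst 0 (Nat.zero_le t)
            have hall : ∀ i, i < n → d i ≤ k := by
              intro i hi
              calc d i ≤ d 0 := hs 0 i (Nat.zero_le i) hi
                _ ≤ k := by omega
            set Q := ∑ i ∈ Finset.Ico k n, d i with hQ
            have hRd : ∑ i ∈ Finset.Ico k n, min (d i) k = Q := by
              rw [hQ]
              refine Finset.sum_congr rfl (fun x hx => ?_)
              rw [mem_Ico] at hx
              have := hall x hx.2
              omega
            have hR' : ∑ i ∈ Finset.Ico k n, min (d' i) k = ∑ i ∈ Finset.Ico k n, d' i := by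
              refine Finset.sum_congr rfl (fun x hx => ?_)
              rw [mem_Ico] at hx
              have h1 := hall x hx.2
              by_cases hit : x = t
              · rw [hit, hd't]; omega
              · by_cases him : x = m
                · rw [him, hd'm]
                  have := hs m m (le_refl m) hmn
                  have := hall m hmn
                  omega
                · rw [hd'o x hit him]; omega
            have hQ2 : ∑ i ∈ Finset.Ico k n, d' i + 2 = Q := by
              rw [hQ, sum_two_erase d' ht' hm' htm', sum_two_erase d ht' hm' htm', hd't, hd'm]
              have : ∑ i ∈ ((Finset.Ico k n).erase t).erase m, d' i
                  = ∑ i ∈ ((Finset.Ico k n).erase t).erase m, d i := by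
                refine Finset.sum_congr rfl (fun x hx => ?_)
                rw [mem_erase, mem_erase] at hx
                exact hd'o x hx.2.1 hx.1
              omega
            set S := ∑ i ∈ Finset.range n, d i with hS
            have hSQ : k * d t + Q = S := by
              rw [hS, hQ, ← Finset.sum_range_add_sum_Ico d hkn, hLd]
            have hSlow : (t+1) * d t + d m ≤ S := by
              rw [hS, ← Finset.sum_range_add_sum_Ico d (show t + 1 ≤ n by omega)]
              have e : ∑ i ∈ Finset.range (t+1), d i = (t+1) * d t := by
                have e' : ∀ i ∈ Finset.range (t + 1), d i = d t := by
                  intro i hi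
                  rw [mem_range] at hi
                  exact hconst i (by omega)
                rw [Finset.sum_congr rfl e', Finset.sum_const, card_range, smul_eq_mul]
              have hmem : m ∈ Finset.Ico (t+1) n := mem_Ico.2 ⟨by omega, hmn⟩
              have := Finset.single_le_sum (f := d) (fun i _ => Nat.zero_le _) hmem
              omega
            -- need : 2 * (k * d t) + 2 ≤ K + S
            have key : 2 * (k * d t) + 2 ≤ K + S := by
              by_cases hvk : d t < k
              · have q1 : k * d t ≤ k * (k-1) := Nat.mul_le_mul_left k (by omega)
                have q2 : (k+1) * d t ≤ (t+1) * d t := Nat.mul_le_mul_right (d t) (by omega)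
                have q3 : (k+1) * d t = k * d t + d t := by ring
                rw [hK]
                omega
              · have hvk' : d t = k := by omega
                obtain ⟨a, ha⟩ := heven
                obtain ⟨b, hb⟩ := Nat.even_mul_succ_self k
                have q2 : (k+1) * k ≤ (t+1) * k := Nat.mul_le_mul_right k (by omega)
                have q3 : k * (k+1) = k * (k-1) + 2 * k := by
                  have h1 : k + 1 = (k - 1) + 2 := by omega
                  calc k * (k+1) = k * ((k-1) + 2) := by rw [← h1]
                    _ = k * (k-1) + 2 * k := by ring
                have q4 : (k+1) * k = k * (k+1) := by ring
                have q5 : k * (k+1) = k * k + k := by ring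
                rw [hK]
                rw [hvk'] at hSlow ⊢
                omega
            omega

lemma graphical_suff : ∀ (N n : ℕ) (d : ℕ → ℕ), (∑ i ∈ Finset.range n, d i) = N →
    (∀ i j, i ≤ j → j < n → d j ≤ d i) →
    Even (∑ i ∈ Finset.range n, d i) →
    (∀ k, 1 ≤ k → k ≤ n →
      ∑ i ∈ Finset.range k, d i ≤ k * (k - 1) + ∑ i ∈ Finset.Ico k n, min (d i) k) →
    Graphical n d := by
  intro N
  induction N using Nat.strong_induction_on with
  | _ N IH =>
  intro n d hN hs heven hEG
  by_cases hz : ∀ i, i < n → d i = 0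
  · exact ⟨⊥, SimpleGraph.Bot.adjDecidable (Fin n),
      fun i => by rw [SimpleGraph.bot_degree]; exact (hz i.val i.isLt).symm⟩
  · push_neg at hz
    obtain ⟨i₀, hi₀n, hi₀⟩ := hz
    have hn1 : 1 ≤ n := by omega
    obtain ⟨m, hdm, hmn, hzero⟩ : ∃ m, 1 ≤ d m ∧ m < n ∧ ∀ i, m < i → i < n → d i = 0 := by
      refine ⟨Nat.findGreatest (fun i => 1 ≤ d i) (n-1), ?_, ?_, ?_⟩
      · exact Nat.findGreatest_spec (P := fun i => 1 ≤ d i) (m := i₀) (by omega) (by omega)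
      · exact lt_of_le_of_lt (Nat.findGreatest_le (n-1)) (by omega)
      · intro i h1 h2
        have := Nat.findGreatest_is_greatest (P := fun i => 1 ≤ d i) (n := n - 1) h1 (by omega)
        omega
    have hd0 : 1 ≤ d 0 := le_trans hdm (hs 0 m (Nat.zero_le m) hmn)
    have hd0m : d 0 ≤ m := by
      have hEG1 := hEG 1 le_rfl hn1
      have hsplit : ∑ i ∈ Finset.Ico 1 (m+1), min (d i) 1
          + ∑ i ∈ Finset.Ico (m+1) n, min (d i) 1 = ∑ i ∈ Finset.Ico 1 n, min (d i) 1 :=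
        Finset.sum_Ico_consecutive _ (by omega) (by omega)
      have h2 : ∑ i ∈ Finset.Ico (m+1) n, min (d i) 1 = 0 := by
        refine Finset.sum_eq_zero (fun i hi => ?_)
        rw [Finset.mem_Ico] at hi
        rw [hzero i (by omega) hi.2]
        rfl
      have h3 : ∑ i ∈ Finset.Ico 1 (m+1), min (d i) 1 ≤ m := by
        calc ∑ i ∈ Finset.Ico 1 (m+1), min (d i) 1 ≤ ∑ _i ∈ Finset.Ico 1 (m+1), 1 :=
            Finset.sum_le_sum (fun i _ => Nat.min_le_right _ _)
          _ = m := by rw [Finset.sum_const, Nat.card_Ico, smul_eq_mul]; omega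
      have h4 : ∑ i ∈ Finset.range 1, d i = d 0 := Finset.sum_range_one d
      omega
    have hm1 : 1 ≤ m := by omega
    obtain ⟨t, htm, hconst, hdrop⟩ : ∃ t, t < m ∧ (∀ i, i ≤ t → d i = d t) ∧
        (∀ i, t < i → i < n → i ≠ m → d i < d t) := by
      by_cases hvc : d 0 = d m
      · have hall : ∀ i, i ≤ m → d i = d 0 := fun i hi =>
          le_antisymm (hs 0 i (Nat.zero_le i) (by omega)) (hvc ▸ hs i m hi hmn)
        refine ⟨m - 1, by omega, fun i hi => ?_, fun i h1 h2 h3 => ?_⟩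
        · rw [hall i (by omega), hall (m-1) (by omega)]
        · rw [hall (m-1) (by omega), hzero i (by omega) h2]
          omega
      · have hex2 : ∃ i, i < m ∧ d (i+1) < d i := by
          by_contra hcon
          push_neg at hcon
          have hchain : ∀ j, j ≤ m → d 0 ≤ d j := by
            intro j
            induction j with
            | zero => intro _; exact le_refl _
            | succ j ihj =>
              intro hjm
              exact le_trans (ihj (by omega)) (hcon j (by omega))
          have h1 := hchain m le_rfl
          have h2 := hs 0 m (Nat.zero_le m) hmn
          omega
        obtain ⟨t, ⟨htm, hdropt⟩, htmin⟩ :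
            ∃ t, (t < m ∧ d (t+1) < d t) ∧ ∀ i, i < t → ¬(i < m ∧ d (i+1) < d i) :=
          ⟨Nat.find hex2, Nat.find_spec hex2, fun i hi => Nat.find_min hex2 hi⟩
        have hchain : ∀ j, j ≤ t → d 0 ≤ d j := by
          intro j
          induction j with
          | zero => intro _; exact le_refl _
          | succ j ihj =>
            intro hjt
            have := htmin j (by omega)
            push_neg at this
            have h1 : ¬ d (j+1) < d j := by
              intro hc
              exact absurd (this (by omega)) (by omega)
            exact le_trans (ihj (by omega)) (by omega)
        have hconst0 : ∀ i, i ≤ t → d i = d 0 := fun i hi =>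
          le_antisymm (hs 0 i (Nat.zero_le i) (by omega)) (hchain i hi)
        refine ⟨t, htm, fun i hi => ?_, fun i h1 h2 h3 => ?_⟩
        · rw [hconst0 i hi, hconst0 t le_rfl]
        · have h4 := hs (t+1) i h1 h2
          omega
    obtain ⟨hsorted', hsum', hEG'⟩ := choudum n d t m hs hEG heven hmn hdm hzero htm hconst hdrop
    set d' : ℕ → ℕ := fun i => if i = t ∨ i = m then d i - 1 else d i with hd'
    have htm' : t ≠ m := Nat.ne_of_lt htm
    have hdt : 1 ≤ d t := le_trans hdm (hs t m (le_of_lt htm) hmn)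
    have hd't : d' t = d t - 1 := by rw [hd']; simp
    have hd'm : d' m = d m - 1 := by rw [hd']; simp
    have hd'o : ∀ i, i ≠ t → i ≠ m → d' i = d i := by
      intro i h1 h2; rw [hd']; simp [h1, h2]
    have hsum2 : ∑ i ∈ Finset.range n, d' i + 2 = ∑ i ∈ Finset.range n, d i := hsum'
    have hN2 : 2 ≤ N := by omega
    have hNd' : ∑ i ∈ Finset.range n, d' i = N - 2 := by omega
    have heven' : Even (∑ i ∈ Finset.range n, d' i) := by
      obtain ⟨a, ha⟩ := heven
      exact ⟨a - 1, by omega⟩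
    obtain ⟨G', inst', hdegG'⟩ := IH (N - 2) (by omega) n d' hNd' hsorted' heven' hEG'
    set tF : Fin n := ⟨t, by omega⟩ with htF
    set mF : Fin n := ⟨m, hmn⟩ with hmF
    have htFmF : tF ≠ mF := by
      intro h
      rw [Fin.ext_iff] at h
      exact htm' h
    have hdegt : G'.degree tF = d t - 1 := by rw [hdegG' tF]; exact hd't
    have hdegm : G'.degree mF = d m - 1 := by rw [hdegG' mF]; exact hd'm
    obtain ⟨G₂, inst₂, hdeg₂, hna⟩ : ∃ (G₂ : SimpleGraph (Fin n)) (_ : DecidableRel G₂.Adj),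
        (∀ x, G₂.degree x = G'.degree x) ∧ ¬G₂.Adj tF mF := by
      by_cases hadj : G'.Adj tF mF
      · set W : Finset (Fin n) := (Finset.range (m+1)).attachFin
          (fun x hx => by rw [Finset.mem_range] at hx; omega) with hW
        have hWcard : W.card = m + 1 := by
          rw [hW, Finset.card_attachFin, Finset.card_range]
        set U : Finset (Fin n) := insert tF (G'.neighborFinset tF) with hU
        have hUcard : U.card ≤ d t := by
          calc U.card ≤ (G'.neighborFinset tF).card + 1 := Finset.card_insert_le _ _
            _ = G'.degree tF + 1 := rfl
            _ ≤ d t := by omega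
        have hnsub : ¬ W ⊆ U := by
          intro hsub
          have := Finset.card_le_card hsub
          have hd0t : d t ≤ d 0 := hs 0 t (Nat.zero_le t) (by omega)
          omega
        obtain ⟨kF, hkW, hkU⟩ := Finset.not_subset.1 hnsub
        have hkval : kF.val ≤ m := by
          rw [hW, Finset.mem_attachFin, Finset.mem_range] at hkW
          omega
        have hkt : kF ≠ tF := fun h => hkU (h ▸ Finset.mem_insert_self tF _)
        have hkN : ¬ G'.Adj tF kF := fun h =>
          hkU (Finset.mem_insert_of_mem ((SimpleGraph.mem_neighborFinset _ _ _).2 h))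
        have hkm : kF ≠ mF := fun h =>
          hkN (h ▸ hadj)
        have hkvalt : kF.val ≠ t := fun h => hkt (Fin.ext h)
        have hkvalm : kF.val ≠ m := fun h => hkm (Fin.ext h)
        have hdegk : G'.degree mF ≤ G'.degree kF := by
          rw [hdegm, hdegG' kF, hd'o kF.val hkvalt hkvalm]
          have := hs kF.val m hkval hmn
          omega
        obtain ⟨G₂, inst₂, hsame, hno⟩ := swap_away G' hadj hkN hkt hkm hdegk
        exact ⟨G₂, inst₂, hsame, hno⟩
      · exact ⟨G', inst', fun x => rfl, hadj⟩
    obtain ⟨G₃, inst₃, hdt3, hdm3, hother⟩ := add_edge G₂ htFmF hna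
    refine ⟨G₃, inst₃, fun i => ?_⟩
    by_cases hit : i = tF
    · rw [hit, hdt3, hdeg₂, hdegt]
      show d t - 1 + 1 = d t
      omega
    · by_cases him : i = mF
      · rw [him, hdm3, hdeg₂, hdegm]
        show d m - 1 + 1 = d m
        omega
      · rw [hother i hit him, hdeg₂, hdegG' i,
          hd'o i.val (fun h => hit (Fin.ext h)) (fun h => him (Fin.ext h))]

/-- Erdős–Gallai theorem: a nonincreasing sequence of natural numbers with even
sum is graphical iff for every `k` with `1 ≤ k ≤ n` the sum of the first `k`
degrees is at most `k(k-1)` plus the sum over the remaining indices of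
`min (d i) k`. -/
theorem erdos_gallai (n : ℕ) (d : ℕ → ℕ)
    (hsorted : ∀ i j, i ≤ j → j < n → d j ≤ d i)
    (heven : Even (∑ i ∈ Finset.range n, d i)) :
    Graphical n d ↔
      ∀ k, 1 ≤ k → k ≤ n →
        ∑ i ∈ Finset.range k, d i ≤ k * (k - 1) + ∑ i ∈ Finset.Ico k n, min (d i) k := by
  constructor
  · exact graphical_nec n d
  · intro hEG
    exact graphical_suff (∑ i ∈ Finset.range n, d i) n d rfl hsorted heven hEG
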